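/- For every first-order problem f : (ℕ→ℕ) → Set ℕ, the Wadge game for f is determined: either Player II has a winning strategy or Player I has a winning strategy. -/

import Mathlib

/-!
Player II's answer is fixed by finitely many of Player I's moves, so it is correct for a whole
cylinder around the play. If every point of the domain has a cylinder on which one answer is
correct throughout the domain, II wins by waiting until the moves seen so far span such a
cylinder. Otherwise some `a` in the domain has no such cylinder: I plays `a` until II commits to
`n` in round `k`, and then follows a point of the domain that extends `a` up to `k` and at which
`n` is wrong.
-/

/-- The domain of a first-order problem. -/
def domFO (f : (ℕ → ℕ) → Set ℕ) : Set (ℕ → ℕ) := {p | f p ≠ ∅}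

/-- The histories `([x 0, …, x (k-1)], [y 0, …, y (k-1)])` after `k` rounds of the
play of Player I's strategy `σ` against Player II's strategy `τ` in the Wadge game. -/
def hist (σ : List (Option ℕ) → ℕ) (τ : List ℕ → Option ℕ) :
    ℕ → List ℕ × List (Option ℕ)
  | 0 => ([], [])
  | k + 1 =>
    let h := hist σ τ k
    let xk := σ h.2
    (h.1 ++ [xk], h.2 ++ [τ (h.1 ++ [xk])])

/-- Player I's moves in the play of `σ` against `τ`. -/
def playX (σ : List (Option ℕ) → ℕ) (τ : List ℕ → Option ℕ) (k : ℕ) : ℕ :=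
  σ (hist σ τ k).2

/-- Player II's moves in the play of `σ` against `τ`. -/
def playY (σ : List (Option ℕ) → ℕ) (τ : List ℕ → Option ℕ) (k : ℕ) : Option ℕ :=
  τ ((hist σ τ k).1 ++ [playX σ τ k])

/-- Player II wins the play of `σ` against `τ` in the Wadge game for `f`. -/
def IIWins (f : (ℕ → ℕ) → Set ℕ) (σ : List (Option ℕ) → ℕ)
    (τ : List ℕ → Option ℕ) : Prop :=
  playX σ τ ∉ domFO f ∨
    ({k | playY σ τ k ≠ none}.Infinite ∧
      ∃ k n, playY σ τ k = some n ∧ (∀ j < k, playY σ τ j = none) ∧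
        n ∈ f (playX σ τ))

open PiNat

lemma getD_map_range {α : Type*} (y : ℕ → α) (d : α) (m j : ℕ) :
    ((List.range m).map y).getD j d = if j < m then y j else d := by
  split_ifs with h <;> simp [h]

lemma cylinder_getD_map_range (x : ℕ → ℕ) (m : ℕ) :
    cylinder (fun i => ((List.range m).map x).getD i 0) m = cylinder x m := by
  ext z
  simp +contextual only [mem_cylinder_iff, getD_map_range, if_true]

lemma hist_eq (σ : List (Option ℕ) → ℕ) (τ : List ℕ → Option ℕ) (k : ℕ) :
    hist σ τ k = ((List.range k).map (playX σ τ), (List.range k).map (playY σ τ)) := by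
  induction k with
  | zero => rfl
  | succ k ih =>
    simp only [hist, playX, playY, ih, List.range_succ, List.map_append, List.map_singleton]

lemma playX_eq (σ : List (Option ℕ) → ℕ) (τ : List ℕ → Option ℕ) (k : ℕ) :
    playX σ τ k = σ ((List.range k).map (playY σ τ)) := by
  rw [playX, hist_eq]

lemma playY_eq (σ : List (Option ℕ) → ℕ) (τ : List ℕ → Option ℕ) (k : ℕ) :
    playY σ τ k = τ ((List.range (k + 1)).map (playX σ τ)) := by
  rw [playY, hist_eq, List.range_succ, List.map_append]
  rfl

section PlayerII

variable (f : (ℕ → ℕ) → Set ℕ)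

def SolvesOn (n : ℕ) (S : Set (ℕ → ℕ)) : Prop :=
  ∀ z ∈ S, z ∈ domFO f → n ∈ f z

open Classical in
noncomputable def solvingStrategy : List ℕ → Option ℕ := fun s =>
  if h : ∃ n, SolvesOn f n (cylinder (fun i => s.getD i 0) s.length) then some h.choose
  else none

variable {f}

lemma SolvesOn.mono {n : ℕ} {S T : Set (ℕ → ℕ)} (h : SolvesOn f n T) (hST : S ⊆ T) :
    SolvesOn f n S :=
  fun z hz => h z (hST hz)

lemma playY_solvingStrategy_of_solvable {σ : List (Option ℕ) → ℕ} {k : ℕ}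
    (h : ∃ n, SolvesOn f n (cylinder (playX σ (solvingStrategy f)) (k + 1))) :
    playY σ (solvingStrategy f) k = some h.choose := by
  rw [playY_eq, solvingStrategy, List.length_map, List.length_range, cylinder_getD_map_range,
    dif_pos h]

lemma playY_solvingStrategy_of_not_solvable {σ : List (Option ℕ) → ℕ} {k : ℕ}
    (h : ¬∃ n, SolvesOn f n (cylinder (playX σ (solvingStrategy f)) (k + 1))) :
    playY σ (solvingStrategy f) k = none := by
  rw [playY_eq, solvingStrategy, List.length_map, List.length_range, cylinder_getD_map_range,
    dif_neg h]

theorem solvingStrategy_wins (H : ∀ x ∈ domFO f, ∃ m n, SolvesOn f n (cylinder x m))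
    (σ : List (Option ℕ) → ℕ) : IIWins f σ (solvingStrategy f) := by
  classical
  set x := playX σ (solvingStrategy f)
  by_cases hx : x ∈ domFO f
  swap
  · exact Or.inl hx
  have solvable_mono {k l} (hkl : k ≤ l) :
      (∃ n, SolvesOn f n (cylinder x k)) → ∃ n, SolvesOn f n (cylinder x l) :=
    fun ⟨n, hn⟩ => ⟨n, hn.mono (cylinder_anti x hkl)⟩
  have hsolv : ∃ k n, SolvesOn f n (cylinder x (k + 1)) := by
    obtain ⟨m, hm⟩ := H x hx
    exact ⟨m, solvable_mono m.le_succ hm⟩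
  set k₀ := Nat.find hsolv
  have hk₀ := Nat.find_spec hsolv
  refine Or.inr ⟨(Set.Ici_infinite k₀).mono fun k hk => ?_, k₀, hk₀.choose, ?_, fun j hj => ?_,
    hk₀.choose_spec x (self_mem_cylinder x _) hx⟩
  · simp [playY_solvingStrategy_of_solvable (solvable_mono (Nat.succ_le_succ hk) hk₀)]
  · exact playY_solvingStrategy_of_solvable hk₀
  · exact playY_solvingStrategy_of_not_solvable (Nat.find_min hsolv hj)

end PlayerII

section PlayerI

open Classical in
/-- Player I plays `a` until Player II first answers, say `n` in round `k`, and then continues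
along `Z (k + 1) n`. -/
noncomputable def switchingStrategy (a : ℕ → ℕ) (Z : ℕ → ℕ → ℕ → ℕ) :
    List (Option ℕ) → ℕ := fun h =>
  if hc : ∃ j, h.getD j none ≠ none then
    Z (Nat.find hc + 1) ((h.getD (Nat.find hc) none).getD 0) h.length
  else a h.length

variable {a : ℕ → ℕ} {Z : ℕ → ℕ → ℕ → ℕ} {y : ℕ → Option ℕ}

lemma switchingStrategy_of_forall_none {m : ℕ} (hy : ∀ j < m, y j = none) :
    switchingStrategy a Z ((List.range m).map y) = a m := by
  rw [switchingStrategy, dif_neg, List.length_map, List.length_range]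
  simp only [not_exists, not_not]
  intro j
  rw [getD_map_range]
  split_ifs with hj
  exacts [hy j hj, rfl]

lemma switchingStrategy_of_first_some {k n m : ℕ} (hk : y k = some n)
    (hfirst : ∀ j < k, y j = none) (hkm : k < m) :
    switchingStrategy a Z ((List.range m).map y) = Z (k + 1) n m := by
  have hk_ne : ((List.range m).map y).getD k none ≠ none := by
    rw [getD_map_range, if_pos hkm, hk]
    exact Option.some_ne_none n
  have hc : ∃ j, ((List.range m).map y).getD j none ≠ none := ⟨k, hk_ne⟩
  have hfind : Nat.find hc = k := by
    refine (Nat.find_eq_iff hc).mpr ⟨hk_ne, fun j hj => ?_⟩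
    rw [getD_map_range, if_pos (hj.trans hkm), hfirst j hj, not_not]
  rw [switchingStrategy, dif_pos hc, hfind, getD_map_range, if_pos hkm, hk,
    List.length_map, List.length_range, Option.getD_some]

variable {τ : List ℕ → Option ℕ}

lemma playX_switchingStrategy_of_first_some (hZ : ∀ m n, Z m n ∈ cylinder a m) {k n : ℕ}
    (hk : playY (switchingStrategy a Z) τ k = some n)
    (hfirst : ∀ j < k, playY (switchingStrategy a Z) τ j = none) :
    playX (switchingStrategy a Z) τ = Z (k + 1) n := by
  funext i
  rw [playX_eq]
  rcases lt_or_ge k i with hki | hik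
  · exact switchingStrategy_of_first_some hk hfirst hki
  · rw [switchingStrategy_of_forall_none fun j hj => hfirst j (by omega)]
    exact (mem_cylinder_iff.mp (hZ (k + 1) n) i (by omega)).symm

lemma playX_switchingStrategy_of_forall_none
    (hy : ∀ k, playY (switchingStrategy a Z) τ k = none) :
    playX (switchingStrategy a Z) τ = a := by
  funext i
  rw [playX_eq, switchingStrategy_of_forall_none fun j _ => hy j]

theorem switchingStrategy_wins {f : (ℕ → ℕ) → Set ℕ} (ha : a ∈ domFO f)
    (hZ : ∀ m n, Z m n ∈ cylinder a m) (hZdom : ∀ m n, Z m n ∈ domFO f)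
    (hZf : ∀ m n, n ∉ f (Z m n)) (τ : List ℕ → Option ℕ) :
    ¬IIWins f (switchingStrategy a Z) τ := by
  classical
  rintro (hx | ⟨-, k, n, hk, hfirst, hn⟩)
  · by_cases hy : ∃ k, playY (switchingStrategy a Z) τ k ≠ none
    · obtain ⟨n, hn⟩ := Option.ne_none_iff_exists'.mp (Nat.find_spec hy)
      rw [playX_switchingStrategy_of_first_some hZ hn fun j hj => not_not.mp (Nat.find_min hy hj)]
        at hx
      exact hx (hZdom _ _)
    · push Not at hy
      rw [playX_switchingStrategy_of_forall_none hy] at hx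
      exact hx ha
  · rw [playX_switchingStrategy_of_first_some hZ hk hfirst] at hn
    exact hZf _ _ hn

end PlayerI

theorem wadge_game_determined (f : (ℕ → ℕ) → Set ℕ) :
    (∃ τ : List ℕ → Option ℕ, ∀ σ : List (Option ℕ) → ℕ, IIWins f σ τ) ∨
    (∃ σ : List (Option ℕ) → ℕ, ∀ τ : List ℕ → Option ℕ, ¬ IIWins f σ τ) := by
  by_cases H : ∀ x ∈ domFO f, ∃ m n, SolvesOn f n (cylinder x m)
  · exact Or.inl ⟨solvingStrategy f, solvingStrategy_wins H⟩
  · obtain ⟨a, ha, hcounter⟩ :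
        ∃ a ∈ domFO f, ∀ m n, ∃ z ∈ cylinder a m, z ∈ domFO f ∧ n ∉ f z := by
      simpa [SolvesOn] using H
    choose Z hZ hZdom hZf using hcounter
    exact Or.inr ⟨switchingStrategy a Z, switchingStrategy_wins ha hZ hZdom hZf⟩
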